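/- (Energy dissipation identity, formal) Let ρ^± : 𝕋² × [0,T) → ℝ be smooth solutions of ∂ρ^±/∂t = ∓(R₁²R₂²(ρ⁺−ρ⁻)) ∂ρ^±/∂x₁ with ∂ρ^±/∂x₁ ≥ 0, where ρ^± − L x₁ is ℤ²-periodic. Set ρ = ρ⁺ − ρ⁻ (ℤ²-periodic). Then (1/2)∫_{𝕋²}(R₁R₂ρ(·,t))² + ∫₀ᵗ∫_{𝕋²}(R₁²R₂²ρ)²(∂ρ⁺/∂x₁ + ∂ρ⁻/∂x₁) ≤ (1/2)∫_{𝕋²}(R₁R₂ρ(·,0))²; i.e. the elastic energy (1/2)‖R₁R₂ρ‖²_{L²} is nonincreasing in time. -/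

import Mathlib

open MeasureTheory Complex

noncomputable section

/-- The two-dimensional torus `𝕋² = ℝ²/ℤ²`. -/
abbrev T2 := UnitAddCircle × UnitAddCircle

/-- The Fourier coefficient `c_k(f) = ∫_{𝕋²} f(x) e^{-2πi k·x} dx`. -/
noncomputable def fc (f : T2 → ℂ) (k : ℤ × ℤ) : ℂ :=
  ∫ x : T2, (fourier (-k.1) x.1) * (fourier (-k.2) x.2) * f x

/-- `|k| = √(k₁² + k₂²)`. -/
noncomputable def kabs (k : ℤ × ℤ) : ℝ := Real.sqrt ((k.1:ℝ)^2 + (k.2:ℝ)^2)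

/-- The symbol `k_i/|k|` of the `i`-th Riesz transform (vanishing at `k = 0`). -/
noncomputable def rieszSymbol (i : Fin 2) (k : ℤ × ℤ) : ℝ :=
  if k = 0 then 0 else (if i = 0 then (k.1:ℝ) else (k.2:ℝ)) / kabs k

/-- `Rf` is the `i`-th Riesz transform of `f`:
`c_k(R_i f) = (k_i/|k|) c_k(f)` for `k ≠ 0` and `c_0(R_i f) = 0`. -/
def IsRiesz (i : Fin 2) (f Rf : T2 → ℂ) : Prop :=
  ∀ k : ℤ × ℤ, fc Rf k = (rieszSymbol i k : ℂ) * fc f k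

/-- The Fourier coefficient of a real-valued function on `𝕋²`. -/
noncomputable def fcR (f : T2 → ℝ) (k : ℤ × ℤ) : ℂ := fc (fun x => (f x : ℂ)) k

/-- The canonical projection `ℝ² → 𝕋²`. -/
noncomputable def pr (x : ℝ × ℝ) : T2 := ((x.1 : UnitAddCircle), (x.2 : UnitAddCircle))

/-!
Because the symbols of `R₁R₂` and `R₁²R₂² = (R₁R₂)²` are real, Parseval's identity turns the
difference of energies at two times into a pairing with the increment of `ρ` alone:
`‖R₁R₂ρ(u)‖² - ‖R₁R₂ρ(s)‖² = ⟨V(u) + V(s), ρ(u) - ρ(s)⟩` with `V = R₁²R₂²ρ`.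
Dividing by `u - s` and using dominated convergence, the energy has time derivative
`2⟨V, ∂ₜρ⟩ = -2 ∫ V² (∂₁ρ⁺ + ∂₁ρ⁻)` by the transport equations, and integrating in time gives
the dissipation identity.
-/

open MeasureTheory Filter Topology Set
open scoped ComplexConjugate

theorem UnitAddCircle.volume_eq_haarAddCircle :
    (volume : Measure UnitAddCircle) = AddCircle.haarAddCircle := by
  simp [AddCircle.volume_eq_smul_haarAddCircle]

/-- `Mathlib.Analysis.Fourier.AddCircleMulti` proves Parseval's identity for this measure, not for
the product of the `volume`s (which agree only up to a proof). -/
abbrev haarTorus : Measure (UnitAddTorus (Fin 2)) :=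
  Measure.pi fun _ => AddCircle.haarAddCircle

theorem measurePreserving_piFinTwo_haarTorus :
    MeasurePreserving (MeasurableEquiv.piFinTwo fun _ => UnitAddCircle) haarTorus
      (volume : Measure T2) := by
  rw [Measure.volume_eq_prod, UnitAddCircle.volume_eq_haarAddCircle]
  exact measurePreserving_piFinTwo fun _ => AddCircle.haarAddCircle

theorem mFourierCoeff_comp_piFinTwo (f : T2 → ℂ) (n : Fin 2 → ℤ) :
    UnitAddTorus.mFourierCoeff (f ∘ MeasurableEquiv.piFinTwo fun _ => UnitAddCircle) n
      = fc f (finTwoArrowEquiv ℤ n) := by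
  rw [UnitAddTorus.mFourierCoeff, fc]
  refine Eq.trans ?_ (measurePreserving_piFinTwo_haarTorus.integral_comp' _)
  congr 1
  ext t
  simp [UnitAddTorus.mFourier, Fin.prod_univ_two]

theorem hasSum_conj_fc_mul_fc (f g : C(T2, ℂ)) :
    HasSum (fun k => conj (fc f k) * fc g k) (∫ x, conj (f x) * g x) := by
  let e : C(UnitAddTorus (Fin 2), T2) :=
    ⟨MeasurableEquiv.piFinTwo fun _ => UnitAddCircle, (Homeomorph.piFinTwo _).continuous⟩
  have hcoeff (φ : C(T2, ℂ)) (n : Fin 2 → ℤ) :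
      UnitAddTorus.mFourierCoeff ((φ.comp e).toLp 2 haarTorus ℂ) n
        = fc φ (finTwoArrowEquiv ℤ n) :=
    (UnitAddTorus.mFourierCoeff_toLp (φ.comp e) n).trans (mFourierCoeff_comp_piFinTwo φ n)
  have h := UnitAddTorus.hasSum_prod_mFourierCoeff ((f.comp e).toLp 2 haarTorus ℂ)
    ((g.comp e).toLp 2 haarTorus ℂ)
  simp only [hcoeff] at h
  rw [← (finTwoArrowEquiv ℤ).hasSum_iff,
    ← measurePreserving_piFinTwo_haarTorus.integral_comp' fun x => conj (f x) * g x]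
  convert h using 1
  · rfl
  refine integral_congr_ae (μ := haarTorus) ?_
  filter_upwards [(f.comp e).coeFn_toLp (p := 2) (𝕜 := ℂ) (μ := haarTorus),
    (g.comp e).coeFn_toLp (p := 2) (𝕜 := ℂ) (μ := haarTorus)] with t hf hg
  rw [hf, hg]
  rfl

theorem hasSum_conj_fcR_mul_fcR {f g : T2 → ℝ} (hf : Continuous f) (hg : Continuous g) :
    HasSum (fun k => conj (fcR f k) * fcR g k) (∫ x, f x * g x : ℝ) := by
  convert hasSum_conj_fc_mul_fc ⟨fun x => (f x : ℂ), by fun_prop⟩ ⟨fun x => (g x : ℂ), by fun_prop⟩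
    using 1
  · rfl
  rw [← integral_complex_ofReal]
  simp

theorem integrable_fourier_mul_ofReal {f : T2 → ℝ} (hf : Continuous f) (k : ℤ × ℤ) :
    Integrable fun x : T2 => fourier (-k.1) x.1 * fourier (-k.2) x.2 * (f x : ℂ) :=
  (by fun_prop : Continuous _).integrable_of_hasCompactSupport (.of_compactSpace _)

theorem fcR_add {f g : T2 → ℝ} (hf : Continuous f) (hg : Continuous g) (k : ℤ × ℤ) :
    fcR (f + g) k = fcR f k + fcR g k := by
  simp only [fcR, fc, Pi.add_apply, ofReal_add, mul_add]
  exact integral_add (integrable_fourier_mul_ofReal hf k) (integrable_fourier_mul_ofReal hg k)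

theorem fcR_sub {f g : T2 → ℝ} (hf : Continuous f) (hg : Continuous g) (k : ℤ × ℤ) :
    fcR (f - g) k = fcR f k - fcR g k := by
  simp only [fcR, fc, Pi.sub_apply, ofReal_sub, mul_sub]
  exact integral_sub (integrable_fourier_mul_ofReal hf k) (integrable_fourier_mul_ofReal hg k)

theorem pr_surjective : Function.Surjective pr := by
  rintro ⟨y₁, y₂⟩
  obtain ⟨x₁, rfl⟩ := QuotientAddGroup.mk_surjective y₁
  obtain ⟨x₂, rfl⟩ := QuotientAddGroup.mk_surjective y₂
  exact ⟨(x₁, x₂), rfl⟩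

theorem integral_sq_sub_integral_sq_of_multiplier (m : ℤ × ℤ → ℝ) {f g Af Ag Bf Bg : T2 → ℝ}
    (hf : Continuous f) (hg : Continuous g) (hAf : Continuous Af) (hAg : Continuous Ag)
    (hBf : Continuous Bf) (hBg : Continuous Bg)
    (hAf_coeff : ∀ k, fcR Af k = m k * fcR f k) (hAg_coeff : ∀ k, fcR Ag k = m k * fcR g k)
    (hBf_coeff : ∀ k, fcR Bf k = (m k : ℂ) ^ 2 * fcR f k)
    (hBg_coeff : ∀ k, fcR Bg k = (m k : ℂ) ^ 2 * fcR g k) :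
    (∫ x, Af x ^ 2) - ∫ x, Ag x ^ 2 = ∫ x, (Bf x + Bg x) * (f x - g x) := by
  have hA := hasSum_conj_fcR_mul_fcR (hAf.add hAg) (hAf.sub hAg)
  have hB := hasSum_conj_fcR_mul_fcR (hBf.add hBg) (hf.sub hg)
  simp only [fcR_add, fcR_sub, hAf, hAg, hBf, hBg, hf, hg, hAf_coeff, hAg_coeff, hBf_coeff,
    hBg_coeff] at hA hB
  have hsymbol : ∀ k, conj (m k * fcR f k + m k * fcR g k) * (m k * fcR f k - m k * fcR g k)
      = conj ((m k : ℂ) ^ 2 * fcR f k + (m k : ℂ) ^ 2 * fcR g k) * (fcR f k - fcR g k) := by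
    intro k
    simp only [map_add, map_mul, map_pow, conj_ofReal]
    ring
  simp only [hsymbol] at hA
  have h := ofReal_injective (hA.unique hB)
  have hint {φ : T2 → ℝ} (hφ : Continuous φ) : Integrable φ :=
    hφ.integrable_of_hasCompactSupport (.of_compactSpace _)
  rw [← integral_sub (hint (φ := fun x => Af x ^ 2) (by fun_prop))
    (hint (φ := fun x => Ag x ^ 2) (by fun_prop))]
  simpa only [Pi.add_apply, Pi.sub_apply, ← sq_sub_sq] using h

section

variable {X : Type*} [TopologicalSpace X] [CompactSpace X] [MeasurableSpace X]
  [OpensMeasurableSpace X] {μ : Measure X} [IsFiniteMeasure μ]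

theorem continuous_integral_of_continuous_uncurry {F : ℝ → X → ℝ}
    (hF : Continuous (Function.uncurry F)) : Continuous fun s => ∫ y, F s y ∂μ := by
  simpa using continuous_parametric_integral_of_continuous hF isCompact_univ

theorem hasDerivAt_of_sub_eq_integral_mul_sub {G : ℝ → ℝ} {a b b' : ℝ → X → ℝ} {s : ℝ}
    {U : Set ℝ} (hU : U ∈ 𝓝 s) (ha : Continuous (Function.uncurry a))
    (hb' : Continuous (Function.uncurry b')) (hb_meas : ∀ u ∈ U, AEStronglyMeasurable (b u) μ)
    (hb : ∀ τ ∈ U, ∀ y, HasDerivAt (fun t => b t y) (b' τ y) τ)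
    (hG : ∀ u ∈ U, G u - G s = ∫ y, (a u y + a s y) * (b u y - b s y) ∂μ) :
    HasDerivAt G (∫ y, (a s y + a s y) * b' s y ∂μ) s := by
  obtain ⟨δ, hδ, hδU⟩ := Metric.nhds_basis_closedBall.mem_iff.mp hU
  set K := Metric.closedBall s δ
  have hsK : s ∈ K := Metric.mem_closedBall_self hδ.le
  have hKs : K ∈ 𝓝[≠] s := nhdsWithin_le_nhds (Metric.closedBall_mem_nhds s hδ)
  obtain ⟨Ca, hCa⟩ := ((isCompact_closedBall s δ).prod isCompact_univ).exists_bound_of_continuousOn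
    ha.continuousOn
  obtain ⟨Mb, hMb⟩ := ((isCompact_closedBall s δ).prod isCompact_univ).exists_bound_of_continuousOn
    hb'.continuousOn
  have hlip (u : ℝ) (hu : u ∈ K) (y : X) : ‖b u y - b s y‖ ≤ Mb * ‖u - s‖ :=
    (convex_closedBall s δ).norm_image_sub_le_of_norm_hasDerivWithin_le
      (fun τ hτ => (hb τ (hδU hτ) y).hasDerivWithinAt) (fun τ hτ => hMb (τ, y) ⟨hτ, mem_univ y⟩)
      hsK hu
  rw [hasDerivAt_iff_tendsto_slope]
  refine (tendsto_integral_filter_of_dominated_convergence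
    (F := fun u y => (a u y + a s y) * ((b u y - b s y) / (u - s)))
    (fun _ => (Ca + Ca) * Mb) ?_ ?_ (integrable_const _) ?_).congr' ?_
  · filter_upwards [hKs] with u hu
    exact ((ha.uncurry_left u).add (ha.uncurry_left s)).aestronglyMeasurable.mul
      (((hb_meas u (hδU hu)).sub (hb_meas s (hδU hsK))).mul_const (u - s)⁻¹)
  · filter_upwards [hKs, self_mem_nhdsWithin] with u hu hus
    refine Eventually.of_forall fun y => ?_
    have ha_le : ‖a u y + a s y‖ ≤ Ca + Ca := (norm_add_le _ _).trans
      (add_le_add (hCa (u, y) ⟨hu, mem_univ y⟩) (hCa (s, y) ⟨hsK, mem_univ y⟩))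
    have hquot_le : ‖(b u y - b s y) / (u - s)‖ ≤ Mb := by
      rw [norm_div, div_le_iff₀ (norm_pos_iff.mpr (sub_ne_zero.mpr hus))]
      exact hlip u hu y
    rw [norm_mul]
    exact mul_le_mul ha_le hquot_le (norm_nonneg _) ((norm_nonneg _).trans ha_le)
  · refine Eventually.of_forall fun y => ?_
    refine ((((ha.uncurry_right y).tendsto s).mono_left nhdsWithin_le_nhds).add
      tendsto_const_nhds).mul ?_
    exact (hasDerivAt_iff_tendsto_slope.mp (hb s (hδU hsK) y)).congr fun u => slope_def_field _ _ _
  · filter_upwards [hKs] with u hu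
    rw [slope_def_field, hG u (hδU hu), ← integral_div]
    simp only [mul_div_assoc]

end

theorem half_add_integral_eq_of_hasDerivAt {E D : ℝ → ℝ} {T t : ℝ} (hE : Continuous E)
    (hD : Continuous D) (hE_deriv : ∀ s ∈ Ioo 0 T, HasDerivAt E (-2 * D s) s) (ht : t ∈ Ico 0 T) :
    (1 / 2) * E t + ∫ s in (0 : ℝ)..t, D s = (1 / 2) * E 0 := by
  have hFTC := intervalIntegral.integral_eq_sub_of_hasDerivAt_of_le ht.1 hE.continuousOn
    (fun s hs => hE_deriv s ⟨hs.1, hs.2.trans ht.2⟩)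
    ((continuous_const.mul hD).intervalIntegrable 0 t)
  rw [intervalIntegral.integral_const_mul] at hFTC
  linarith

theorem energy_dissipation_general
    (T : ℝ)
    (ρp ρm ρpt ρmt : ℝ → ℝ × ℝ → ℝ)
    (ρT2 d1ρp d1ρm V RRρ : ℝ → T2 → ℝ)
    -- `ρ = ρ⁺ − ρ⁻` is `ℤ²`-periodic, descending to `ρT2` on the torus
    (hdesc : ∀ t ∈ Set.Ico (0:ℝ) T, ∀ x : ℝ × ℝ, ρT2 t (pr x) = ρp t x - ρm t x)
    -- time derivatives
    (hdt : ∀ x : ℝ × ℝ, ∀ t ∈ Set.Ioo (0:ℝ) T,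
      HasDerivAt (fun s => ρp s x) (ρpt t x) t ∧
      HasDerivAt (fun s => ρm s x) (ρmt t x) t)
    -- `V = R₁²R₂²ρ`
    (hV : ∀ t ∈ Set.Ico (0:ℝ) T, ∀ k : ℤ × ℤ,
      fcR (V t) k = ((rieszSymbol 0 k : ℂ))^2 * ((rieszSymbol 1 k : ℂ))^2 * fcR (ρT2 t) k)
    -- `RRρ = R₁R₂ρ`
    (hRR : ∀ t ∈ Set.Ico (0:ℝ) T, ∀ k : ℤ × ℤ,
      fcR (RRρ t) k = (rieszSymbol 0 k : ℂ) * (rieszSymbol 1 k : ℂ) * fcR (ρT2 t) k)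
    -- the transport equations `∂ρ^±/∂t = ∓(R₁²R₂²ρ) ∂ρ^±/∂x₁`
    (hPDE : ∀ t ∈ Set.Ico (0:ℝ) T, ∀ x : ℝ × ℝ,
      ρpt t x = -(V t (pr x)) * d1ρp t (pr x) ∧
      ρmt t x = (V t (pr x)) * d1ρm t (pr x))
    -- continuity of the data
    (hcont : Continuous (fun q : ℝ × T2 => RRρ q.1 q.2) ∧
      Continuous (fun q : ℝ × T2 => V q.1 q.2) ∧
      Continuous (fun q : ℝ × T2 => d1ρp q.1 q.2) ∧
      Continuous (fun q : ℝ × T2 => d1ρm q.1 q.2) ∧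
      ∀ t ∈ Set.Ico (0:ℝ) T, Continuous (ρT2 t)) :
    ∀ t ∈ Set.Ico (0:ℝ) T,
      (1/2) * (∫ y : T2, (RRρ t y)^2)
        + (∫ s in (0:ℝ)..t, ∫ y : T2, (V s y)^2 * (d1ρp s y + d1ρm s y))
      ≤ (1/2) * ∫ y : T2, (RRρ 0 y)^2 := by
  obtain ⟨hRRc, hVc, hd1ρpc, hd1ρmc, hρc⟩ := hcont
  set E : ℝ → ℝ := fun s => ∫ y, RRρ s y ^ 2
  set D : ℝ → ℝ := fun s => ∫ y, V s y ^ 2 * (d1ρp s y + d1ρm s y) with hD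
  have hρ_deriv : ∀ τ ∈ Ioo 0 T, ∀ y, HasDerivAt (fun s => ρT2 s y)
      (-V τ y * (d1ρp τ y + d1ρm τ y)) τ := by
    intro τ hτ y
    obtain ⟨x, rfl⟩ := pr_surjective y
    have h := (hdt x τ hτ).1.sub (hdt x τ hτ).2
    rw [(hPDE τ (Ioo_subset_Ico_self hτ) x).1, (hPDE τ (Ioo_subset_Ico_self hτ) x).2] at h
    refine (h.congr_of_eventuallyEq ?_).congr_deriv (by ring)
    filter_upwards [Ico_mem_nhds hτ.1 hτ.2] with s hs using hdesc s hs x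
  have hE_sub : ∀ u ∈ Ico 0 T, ∀ s ∈ Ico 0 T,
      E u - E s = ∫ y, (V u y + V s y) * (ρT2 u y - ρT2 s y) := fun u hu s hs =>
    integral_sq_sub_integral_sq_of_multiplier (fun k => rieszSymbol 0 k * rieszSymbol 1 k)
      (hρc u hu) (hρc s hs) (hRRc.uncurry_left u) (hRRc.uncurry_left s) (hVc.uncurry_left u)
      (hVc.uncurry_left s) (by push_cast; exact hRR u hu) (by push_cast; exact hRR s hs)
      (fun k => by rw [hV u hu]; push_cast; ring) (fun k => by rw [hV s hs]; push_cast; ring)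
  have hE_deriv : ∀ s ∈ Ioo 0 T, HasDerivAt E (-2 * D s) s := by
    intro s hs
    convert hasDerivAt_of_sub_eq_integral_mul_sub (Ioo_mem_nhds hs.1 hs.2) hVc
      (b' := fun τ y => -V τ y * (d1ρp τ y + d1ρm τ y)) (hVc.neg.mul (hd1ρpc.add hd1ρmc))
      (fun u hu => (hρc u (Ioo_subset_Ico_self hu)).aestronglyMeasurable) hρ_deriv
      (fun u hu => hE_sub u (Ioo_subset_Ico_self hu) s (Ioo_subset_Ico_self hs)) using 1
    rw [hD, ← integral_const_mul]
    congr 1 with y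
    ring
  have hE_cont : Continuous E := continuous_integral_of_continuous_uncurry (hRRc.pow 2)
  have hD_cont : Continuous D :=
    continuous_integral_of_continuous_uncurry ((hVc.pow 2).mul (hd1ρpc.add hd1ρmc))
  exact fun t ht => (half_add_integral_eq_of_hasDerivAt hE_cont hD_cont hE_deriv ht).le

/-- **Energy dissipation inequality (formal)** for the Groma–Balogh system:
if `ρ^±` are smooth solutions of `∂ρ^±/∂t = ∓(R₁²R₂²(ρ⁺−ρ⁻)) ∂ρ^±/∂x₁` with
`∂ρ^±/∂x₁ ≥ 0` and `ρ^± − Lx₁` is `ℤ²`-periodic, then with `ρ = ρ⁺ − ρ⁻`: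
`(1/2)∫(R₁R₂ρ(·,t))² + ∫₀ᵗ∫ (R₁²R₂²ρ)² (∂ρ⁺/∂x₁ + ∂ρ⁻/∂x₁)
  ≤ (1/2)∫(R₁R₂ρ(·,0))²`,
i.e. the elastic energy is nonincreasing in time. -/
theorem energy_dissipation
    (T L : ℝ) (hT : 0 < T) (hL : 0 < L)
    (ρp ρm ρpt ρmt : ℝ → ℝ × ℝ → ℝ)
    (ρT2 d1ρp d1ρm V RRρ : ℝ → T2 → ℝ)
    -- periodicity with slope `L` in `x₁` and periodicity in `x₂`
    (hper : ∀ t ∈ Set.Ico (0:ℝ) T, ∀ x : ℝ × ℝ,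
      ρp t (x.1 + 1, x.2) = ρp t x + L ∧ ρp t (x.1, x.2 + 1) = ρp t x ∧
      ρm t (x.1 + 1, x.2) = ρm t x + L ∧ ρm t (x.1, x.2 + 1) = ρm t x)
    -- `ρ = ρ⁺ − ρ⁻` is `ℤ²`-periodic, descending to `ρT2` on the torus
    (hdesc : ∀ t ∈ Set.Ico (0:ℝ) T, ∀ x : ℝ × ℝ, ρT2 t (pr x) = ρp t x - ρm t x)
    -- `d1ρ^± = ∂ρ^±/∂x₁` (fundamental theorem of calculus in `x₁`)
    (hd1 : ∀ t ∈ Set.Ico (0:ℝ) T, ∀ (x₂ a b : ℝ),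
      ρp t (b, x₂) - ρp t (a, x₂) = (∫ u in a..b, d1ρp t (pr (u, x₂))) ∧
      ρm t (b, x₂) - ρm t (a, x₂) = (∫ u in a..b, d1ρm t (pr (u, x₂))))
    -- nonnegative dislocation densities
    (hpos : ∀ t ∈ Set.Ico (0:ℝ) T, ∀ y : T2, 0 ≤ d1ρp t y ∧ 0 ≤ d1ρm t y)
    -- time derivatives
    (hdt : ∀ x : ℝ × ℝ, ∀ t ∈ Set.Ioo (0:ℝ) T,
      HasDerivAt (fun s => ρp s x) (ρpt t x) t ∧
      HasDerivAt (fun s => ρm s x) (ρmt t x) t)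
    -- `V = R₁²R₂²ρ`
    (hV : ∀ t ∈ Set.Ico (0:ℝ) T, ∀ k : ℤ × ℤ,
      fcR (V t) k = ((rieszSymbol 0 k : ℂ))^2 * ((rieszSymbol 1 k : ℂ))^2 * fcR (ρT2 t) k)
    -- `RRρ = R₁R₂ρ`
    (hRR : ∀ t ∈ Set.Ico (0:ℝ) T, ∀ k : ℤ × ℤ,
      fcR (RRρ t) k = (rieszSymbol 0 k : ℂ) * (rieszSymbol 1 k : ℂ) * fcR (ρT2 t) k)
    -- the transport equations `∂ρ^±/∂t = ∓(R₁²R₂²ρ) ∂ρ^±/∂x₁`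
    (hPDE : ∀ t ∈ Set.Ico (0:ℝ) T, ∀ x : ℝ × ℝ,
      ρpt t x = -(V t (pr x)) * d1ρp t (pr x) ∧
      ρmt t x = (V t (pr x)) * d1ρm t (pr x))
    -- continuity of the data
    (hcont : Continuous (fun q : ℝ × T2 => RRρ q.1 q.2) ∧
      Continuous (fun q : ℝ × T2 => V q.1 q.2) ∧
      Continuous (fun q : ℝ × T2 => d1ρp q.1 q.2) ∧
      Continuous (fun q : ℝ × T2 => d1ρm q.1 q.2) ∧
      ∀ t ∈ Set.Ico (0:ℝ) T, Continuous (ρT2 t)) :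
    ∀ t ∈ Set.Ico (0:ℝ) T,
      (1/2) * (∫ y : T2, (RRρ t y)^2)
        + (∫ s in (0:ℝ)..t, ∫ y : T2, (V s y)^2 * (d1ρp s y + d1ρm s y))
      ≤ (1/2) * ∫ y : T2, (RRρ 0 y)^2 :=
  energy_dissipation_general T ρp ρm ρpt ρmt ρT2 d1ρp d1ρm V RRρ hdesc hdt hV hRR hPDE hcont
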